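/- Let ρ ≥ 1 be a real number such that MST(Q) ≤ ρ · SMT(Q) for every nonempty finite set Q ⊆ ℝ² (i.e., ρ is an upper bound on the Steiner ratio in the plane). Let T_P be a Euclidean minimum spanning tree of P (assume P nonempty), and let G' be a red-blue-purple spanning graph of (R,B,P) of minimum weight among all RBP spanning graphs whose set of purple edges is exactly the edge set of T_P. Then the weight of G' is at most (ρ/2 + 1) times the weight of a minimum red-blue-purple spanning graph of (R,B,P). -/

import Mathlib

/-!
Let `E` be a minimum RBP graph and `E_P` its purple edges. Replacing `E_P` by the Euclidean
MST `T_P` keeps both colour classes connected and makes `T_P` the set of purple edges, so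
`w(G') ≤ w(E) - w(E_P) + MST(P)`. The red–purple and the blue–purple edges of `E` each connect
`P`, so each weighs at least `SMT(P)`, and they share only `E_P`: `2 SMT(P) ≤ w(E) + w(E_P)`.
Since `MST(P) ≤ σ SMT(P)` with `σ = min ρ 2` (the bound 2 comes from shortcutting a walk around
a doubled spanning tree), `w(G') ≤ (1 + σ/2) w(E) + (σ/2 - 1) w(E_P) ≤ (ρ/2 + 1) w(E)`.
-/

open scoped Classical

noncomputable section

/-- The Euclidean plane. -/
abbrev Pt : Type := EuclideanSpace ℝ (Fin 2)

/-- The simple graph on the plane whose edge set is the finite set `E`. -/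
def graphOf (E : Finset (Sym2 Pt)) : SimpleGraph Pt where
  Adj x y := x ≠ y ∧ s(x, y) ∈ E
  symm := ⟨fun x y ⟨hne, he⟩ => ⟨hne.symm, by rwa [Sym2.eq_swap]⟩⟩
  loopless := ⟨fun x ⟨hne, _⟩ => hne rfl⟩

/-- Euclidean length of an edge. -/
def edgeLen (e : Sym2 Pt) : ℝ :=
  Sym2.lift ⟨fun x y => dist x y, fun _ _ => dist_comm _ _⟩ e

/-- Total Euclidean length of a finite edge set. -/
def weight (E : Finset (Sym2 Pt)) : ℝ := ∑ e ∈ E, edgeLen e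

/-- `E` is the edge set of a red-blue-purple spanning graph of `(R, B, P)`. -/
def IsRBP (R B P : Finset Pt) (E : Finset (Sym2 Pt)) : Prop :=
  (∀ e ∈ E, ¬ e.IsDiag) ∧
  (∀ e ∈ E, ∀ x ∈ e, x ∈ R ∪ B ∪ P) ∧
  ((graphOf E).induce (↑(R ∪ P) : Set Pt)).Connected ∧
  ((graphOf E).induce (↑(B ∪ P) : Set Pt)).Connected

/-- `E` is the edge set of a minimum red-blue-purple spanning graph of `(R, B, P)`. -/
def IsMinRBP (R B P : Finset Pt) (E : Finset (Sym2 Pt)) : Prop :=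
  IsRBP R B P E ∧ ∀ E', IsRBP R B P E' → weight E ≤ weight E'

/-- `T` is the edge set of a spanning tree on the point set `Q`. -/
def IsSpanningTreeOn (Q : Finset Pt) (T : Finset (Sym2 Pt)) : Prop :=
  (∀ e ∈ T, ¬ e.IsDiag) ∧
  (∀ e ∈ T, ∀ x ∈ e, x ∈ Q) ∧
  ((graphOf T).induce (↑Q : Set Pt)).IsTree

/-- `T` is the edge set of a Euclidean minimum spanning tree of `Q`. -/
def IsEMST (Q : Finset Pt) (T : Finset (Sym2 Pt)) : Prop :=
  IsSpanningTreeOn Q T ∧ ∀ T', IsSpanningTreeOn Q T' → weight T ≤ weight T'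

/-- `MST(Q)`: the minimum total edge length of a spanning tree on `Q`. -/
def mstLen (Q : Finset Pt) : ℝ :=
  sInf (weight '' {T | IsSpanningTreeOn Q T})

/-- `SMT(Q)`: the Steiner minimal tree length of `Q`,
`inf { MST(Q') : Q' finite, Q ⊆ Q' }`. -/
def smtLen (Q : Finset Pt) : ℝ :=
  sInf {m : ℝ | ∃ Q' : Finset Pt, Q ⊆ Q' ∧ m = mstLen Q'}

open SimpleGraph

lemma edgeLen_mk (a b : Pt) : edgeLen s(a, b) = dist a b := rfl

lemma edgeLen_nonneg (e : Sym2 Pt) : 0 ≤ edgeLen e := by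
  induction e using Sym2.ind with
  | _ a b => exact dist_nonneg (x := a) (y := b)

lemma weight_nonneg (E : Finset (Sym2 Pt)) : 0 ≤ weight E :=
  Finset.sum_nonneg fun e _ => edgeLen_nonneg e

lemma weight_mono {E F : Finset (Sym2 Pt)} (h : E ⊆ F) : weight E ≤ weight F :=
  Finset.sum_le_sum_of_subset_of_nonneg h fun e _ _ => edgeLen_nonneg e

lemma weight_insert_le (e : Sym2 Pt) (E : Finset (Sym2 Pt)) :
    weight (insert e E) ≤ edgeLen e + weight E := by
  by_cases he : e ∈ E
  · rw [Finset.insert_eq_of_mem he]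
    linarith [edgeLen_nonneg e]
  · exact (Finset.sum_insert he).le

lemma weight_union_add_weight_inter (E F : Finset (Sym2 Pt)) :
    weight (E ∪ F) + weight (E ∩ F) = weight E + weight F :=
  Finset.sum_union_inter

lemma weight_union_le (E F : Finset (Sym2 Pt)) : weight (E ∪ F) ≤ weight E + weight F := by
  linarith [weight_union_add_weight_inter E F, weight_nonneg (E ∩ F)]

@[simp]
lemma induce_graphOf_adj {F : Finset (Sym2 Pt)} {Q : Set Pt} {a b : Q} :
    ((graphOf F).induce Q).Adj a b ↔ (a : Pt) ≠ b ∧ s((a : Pt), b) ∈ F :=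
  Iff.rfl

lemma graphOf_mono {E F : Finset (Sym2 Pt)} (h : E ⊆ F) : graphOf E ≤ graphOf F :=
  fun _ _ hab => ⟨hab.1, h hab.2⟩

lemma reachable_induce_graphOf_mono {E F : Finset (Sym2 Pt)} {Q Q' : Set Pt} (hEF : E ⊆ F)
    (hQ : Q ⊆ Q') {a b : Q} (h : ((graphOf E).induce Q).Reachable a b) :
    ((graphOf F).induce Q').Reachable (Set.inclusion hQ a) (Set.inclusion hQ b) :=
  h.map (induceHom ⟨id, fun hab => graphOf_mono hEF hab⟩ fun _ hx => hQ hx)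

lemma SimpleGraph.Reachable.of_forall_adj_reachable {V : Type*} {G H : SimpleGraph V}
    (h : ∀ a b, G.Adj a b → H.Reachable a b) {a b : V} (hab : G.Reachable a b) :
    H.Reachable a b := by
  rw [reachable_iff_reflTransGen] at hab ⊢
  exact Relation.ReflTransGen.lift' id
    (fun a b hab => (reachable_iff_reflTransGen a b).1 (h a b hab)) _ _ hab

lemma SimpleGraph.Connected.of_forall_adj_reachable {V : Type*} {G H : SimpleGraph V}
    (h : ∀ a b, G.Adj a b → H.Reachable a b) (hG : G.Connected) : H.Connected :=
  (connected_iff H).2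
    ⟨fun a b => (hG.preconnected a b).of_forall_adj_reachable h, hG.nonempty⟩

def liftEdges {Q : Finset Pt} (H : SimpleGraph (Q : Set Pt)) : Finset (Sym2 Pt) :=
  H.edgeFinset.image (Sym2.map Subtype.val)

lemma induce_graphOf_liftEdges {Q : Finset Pt} (H : SimpleGraph (Q : Set Pt)) :
    (graphOf (liftEdges H)).induce (Q : Set Pt) = H := by
  ext a b
  have hmap : ∀ e, Sym2.map Subtype.val e = s((a : Pt), b) ↔ e = s(a, b) := fun e =>
    ⟨fun h => Sym2.map.injective Subtype.val_injective h, fun h => h ▸ rfl⟩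
  simp only [induce_graphOf_adj, liftEdges, Finset.mem_image, hmap, exists_eq_right,
    mem_edgeFinset, mem_edgeSet]
  exact ⟨And.right, fun h => ⟨fun hab => h.ne (Subtype.ext hab), h⟩⟩

lemma isSpanningTreeOn_liftEdges {Q : Finset Pt} {H : SimpleGraph (Q : Set Pt)}
    (hH : H.IsTree) : IsSpanningTreeOn Q (liftEdges H) := by
  refine ⟨?_, ?_, (induce_graphOf_liftEdges H).symm ▸ hH⟩
  · simp only [liftEdges, Finset.mem_image, mem_edgeFinset]
    rintro _ ⟨e, he, rfl⟩
    rw [Sym2.isDiag_map Subtype.val_injective]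
    exact H.not_isDiag_of_mem_edgeSet he
  · simp only [liftEdges, Finset.mem_image]
    rintro _ ⟨e, -, rfl⟩ _ hx
    obtain ⟨x, -, rfl⟩ := Sym2.mem_map.1 hx
    exact x.2

lemma liftEdges_subset {Q : Finset Pt} {F : Finset (Sym2 Pt)} {H : SimpleGraph (Q : Set Pt)}
    (hH : H ≤ (graphOf F).induce (Q : Set Pt)) : liftEdges H ⊆ F := by
  simp only [liftEdges, Finset.subset_iff, Finset.mem_image, mem_edgeFinset]
  rintro _ ⟨e, he, rfl⟩
  induction e using Sym2.ind with
  | _ a b => exact (hH he).2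

lemma mstLen_le {Q : Finset Pt} {T : Finset (Sym2 Pt)} (hT : IsSpanningTreeOn Q T) :
    mstLen Q ≤ weight T :=
  csInf_le ⟨0, by rintro _ ⟨T', -, rfl⟩; exact weight_nonneg T'⟩ ⟨T, hT, rfl⟩

lemma mstLen_nonneg (Q : Finset Pt) : 0 ≤ mstLen Q :=
  Real.sInf_nonneg <| by rintro _ ⟨T, -, rfl⟩; exact weight_nonneg T

lemma mstLen_le_weight {Q : Finset Pt} {F : Finset (Sym2 Pt)}
    (hF : ((graphOf F).induce (Q : Set Pt)).Connected) : mstLen Q ≤ weight F := by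
  obtain ⟨T, hTF, hT⟩ := hF.exists_isTree_le
  exact (mstLen_le (isSpanningTreeOn_liftEdges hT)).trans (weight_mono (liftEdges_subset hTF))

lemma exists_isSpanningTreeOn {Q : Finset Pt} (hQ : Q.Nonempty) :
    ∃ T, IsSpanningTreeOn Q T := by
  have : Nonempty (Q : Set Pt) := hQ.to_subtype
  obtain ⟨T, -, hT⟩ := (connected_top_iff.2 this).exists_isTree_le
  exact ⟨_, isSpanningTreeOn_liftEdges hT⟩

lemma le_mstLen {Q : Finset Pt} {c : ℝ} (hQ : Q.Nonempty)
    (h : ∀ T, IsSpanningTreeOn Q T → c ≤ weight T) : c ≤ mstLen Q := by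
  obtain ⟨T, hT⟩ := exists_isSpanningTreeOn hQ
  exact le_csInf ⟨_, T, hT, rfl⟩ (by rintro _ ⟨T', hT', rfl⟩; exact h T' hT')

lemma IsEMST.weight_eq {Q : Finset Pt} {T : Finset (Sym2 Pt)} (hT : IsEMST Q T) :
    weight T = mstLen Q :=
  le_antisymm (le_csInf ⟨_, T, hT.1, rfl⟩ (by rintro _ ⟨T', hT', rfl⟩; exact hT.2 T' hT'))
    (mstLen_le hT.1)

lemma smtLen_nonneg (P : Finset Pt) : 0 ≤ smtLen P :=
  Real.sInf_nonneg <| by rintro _ ⟨Q, -, rfl⟩; exact mstLen_nonneg Q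

lemma smtLen_le_mstLen {P Q : Finset Pt} (hPQ : P ⊆ Q) : smtLen P ≤ mstLen Q :=
  csInf_le ⟨0, by rintro _ ⟨Q', -, rfl⟩; exact mstLen_nonneg Q'⟩ ⟨Q, hPQ, rfl⟩

lemma le_smtLen {P : Finset Pt} {c : ℝ} (h : ∀ Q, P ⊆ Q → c ≤ mstLen Q) :
    c ≤ smtLen P :=
  le_csInf ⟨_, P, subset_rfl, rfl⟩ (by rintro _ ⟨Q, hPQ, rfl⟩; exact h Q hPQ)

def pathLen : List Pt → ℝ
  | [] => 0
  | [_] => 0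
  | a :: b :: t => dist a b + pathLen (b :: t)

def pathEdges : List Pt → Finset (Sym2 Pt)
  | [] => ∅
  | [_] => ∅
  | a :: b :: t => insert s(a, b) (pathEdges (b :: t))

lemma pathLen_cons_cons (a b : Pt) (t : List Pt) :
    pathLen (a :: b :: t) = dist a b + pathLen (b :: t) := rfl

lemma pathLen_le_pathLen_cons (a : Pt) : ∀ l : List Pt, pathLen l ≤ pathLen (a :: l)
  | [] => le_rfl
  | b :: t => by rw [pathLen_cons_cons]; linarith [dist_nonneg (x := a) (y := b)]

lemma pathLen_cons_le_pathLen_cons_cons (x a : Pt) :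
    ∀ l : List Pt, pathLen (x :: l) ≤ pathLen (x :: a :: l)
  | [] => by simp only [pathLen, add_zero, dist_nonneg]
  | b :: t => by
    simp only [pathLen_cons_cons]
    linarith [dist_triangle x a b]

lemma List.Sublist.pathLen_cons_le {l₁ l₂ : List Pt} (h : List.Sublist l₁ l₂) :
    ∀ x, pathLen (x :: l₁) ≤ pathLen (x :: l₂) := by
  induction h with
  | slnil => exact fun _ => le_rfl
  | cons a _ ih => exact fun x => (ih x).trans (pathLen_cons_le_pathLen_cons_cons x a _)
  | cons_cons a _ ih => exact fun x => by simp only [pathLen_cons_cons]; linarith [ih a]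

lemma List.Sublist.pathLen_le {l₁ l₂ : List Pt} (h : List.Sublist l₁ l₂) :
    pathLen l₁ ≤ pathLen l₂ := by
  induction h with
  | slnil => exact le_rfl
  | cons a _ ih => exact ih.trans (pathLen_le_pathLen_cons a _)
  | cons_cons a h _ => exact h.pathLen_cons_le a

lemma pathLen_append_cons (a : Pt) (B : List Pt) :
    ∀ A : List Pt, pathLen (A ++ a :: B) = pathLen (A ++ [a]) + pathLen (a :: B)
  | [] => by simp [pathLen]
  | [c] => by simp [pathLen]
  | c :: d :: A => by
    show dist c d + pathLen (d :: A ++ a :: B) = dist c d + pathLen (d :: A ++ [a]) + _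
    rw [pathLen_append_cons a B (d :: A)]
    ring

lemma weight_pathEdges_le : ∀ l : List Pt, weight (pathEdges l) ≤ pathLen l
  | [] => by simp [weight, pathEdges, pathLen]
  | [_] => by simp [weight, pathEdges, pathLen]
  | a :: b :: t => (weight_insert_le _ _).trans <| by
    rw [pathLen_cons_cons, edgeLen_mk]
    linarith [weight_pathEdges_le (b :: t)]

lemma connected_induce_pathEdges :
    ∀ l : List Pt, l ≠ [] → ((graphOf (pathEdges l)).induce (l.toFinset : Set Pt)).Connected
  | [] => fun h => absurd rfl h
  | [a] => fun _ => by
    have : Subsingleton (([a].toFinset : Finset Pt) : Set Pt) := by simp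
    exact (connected_iff _).2 ⟨fun u v => Subsingleton.elim u v ▸ Reachable.rfl,
      ⟨⟨a, by simp⟩⟩⟩
  | a :: b :: t => fun _ => by
    have hsub : (((b :: t).toFinset : Finset Pt) : Set Pt) ⊆ ((a :: b :: t).toFinset : Set Pt) :=
      fun x => by simp only [Finset.mem_coe, List.mem_toFinset, List.mem_cons]; tauto
    have hE : pathEdges (b :: t) ⊆ pathEdges (a :: b :: t) := Finset.subset_insert _ _
    have hb : b ∈ (((b :: t).toFinset : Finset Pt) : Set Pt) := by simp
    have ih := connected_induce_pathEdges (b :: t) (List.cons_ne_nil b t)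
    refine connected_iff_exists_forall_reachable _ |>.2 ⟨Set.inclusion hsub ⟨b, hb⟩, ?_⟩
    rintro ⟨x, hx⟩
    by_cases hxt : x ∈ (((b :: t).toFinset : Finset Pt) : Set Pt)
    · exact reachable_induce_graphOf_mono hE hsub (ih.preconnected ⟨b, hb⟩ ⟨x, hxt⟩)
    · have hxa : x = a := by
        simp only [Finset.mem_coe, List.mem_toFinset, List.mem_cons] at hx hxt
        tauto
      subst hxa
      refine Adj.reachable ?_
      simp only [induce_graphOf_adj, Set.inclusion, pathEdges]
      exact ⟨fun hbx => hxt (hbx ▸ hb), by simp⟩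

lemma mstLen_toFinset_le_pathLen {l : List Pt} (hl : l ≠ []) : mstLen l.toFinset ≤ pathLen l :=
  (mstLen_le_weight (connected_induce_pathEdges l hl)).trans (weight_pathEdges_le l)

lemma exists_connected_induce_erase {F : Finset (Sym2 Pt)} {Q : Finset Pt} (hQ : Q.Nontrivial)
    (hF : ((graphOf F).induce (Q : Set Pt)).Connected) :
    ∃ x ∈ Q, ∃ y ∈ Q.erase x, s(x, y) ∈ F ∧
      ((graphOf (F.erase s(x, y))).induce (Q.erase x : Set Pt)).Connected := by
  have : Nontrivial (Q : Set Pt) := Set.nontrivial_coe_sort.2 hQ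
  obtain ⟨v, hv⟩ := hF.exists_connected_induce_compl_singleton_of_finite_nontrivial
  obtain ⟨w, hvw⟩ := hF.preconnected.exists_adj_of_nontrivial v
  refine ⟨v, v.2, w, Finset.mem_erase.2 ⟨Ne.symm hvw.1, w.2⟩, hvw.2, ?_⟩
  have hne {u : (Q : Set Pt)} (hu : u ∈ ({v}ᶜ : Set (Q : Set Pt))) : (u : Pt) ≠ v :=
    fun h => hu (Subtype.ext h)
  let f : ((graphOf F).induce (Q : Set Pt)).induce {v}ᶜ →g
      (graphOf (F.erase s((v : Pt), w))).induce (Q.erase v : Set Pt) :=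
    { toFun := fun u => ⟨u.1.1, Finset.mem_erase.2 ⟨hne u.2, u.1.2⟩⟩
      map_rel' := fun {a b} hab => by
        refine ⟨hab.1, Finset.mem_erase.2 ⟨fun h => ?_, hab.2⟩⟩
        rcases Sym2.eq_iff.1 h with ⟨h, -⟩ | ⟨-, h⟩
        exacts [hne a.2 h, hne b.2 h] }
  refine hv.map f fun ⟨u, hu⟩ => ?_
  obtain ⟨hux, huQ⟩ := Finset.mem_erase.1 hu
  exact ⟨⟨⟨u, huQ⟩, fun h => hux (congrArg Subtype.val h)⟩, rfl⟩

/-- Remove a vertex `x` that does not disconnect the graph and splice the detour `y, x, y`,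
through a neighbour `y`, into a walk of the rest. -/
lemma exists_toFinset_eq_pathLen_le (Q : Finset Pt) :
    ∀ F : Finset (Sym2 Pt), ((graphOf F).induce (Q : Set Pt)).Connected →
      ∃ l : List Pt, l.toFinset = Q ∧ pathLen l ≤ 2 * weight F := by
  induction Q using Finset.strongInduction with
  | H Q ih =>
  intro F hF
  have hQ : Q.Nonempty := Set.nonempty_coe_sort.1 hF.nonempty
  obtain ⟨a, rfl⟩ | hQ := hQ.exists_eq_singleton_or_nontrivial
  · exact ⟨[a], by simp, by simp only [pathLen]; linarith [weight_nonneg F]⟩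
  obtain ⟨x, hx, y, hy, hxy, hF'⟩ := exists_connected_induce_erase hQ hF
  obtain ⟨l, hl, hlF⟩ := ih _ (Finset.erase_ssubset hx) _ hF'
  obtain ⟨A, B, rfl⟩ := List.append_of_mem (List.mem_toFinset.1 (hl ▸ hy))
  refine ⟨A ++ y :: x :: y :: B, ?_, ?_⟩
  · rw [← Finset.insert_erase hx, ← hl]
    ext z
    simp only [List.mem_toFinset, List.mem_append, List.mem_cons, Finset.mem_insert]
    tauto
  · have hweight := Finset.sum_erase_add F edgeLen hxy
    rw [← weight, ← weight, edgeLen_mk] at hweight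
    rw [pathLen_append_cons] at hlF ⊢
    rw [pathLen_cons_cons, pathLen_cons_cons, dist_comm y x]
    linarith

lemma mstLen_le_two_mul_weight {P Q : Finset Pt} {F : Finset (Sym2 Pt)} (hPQ : P ⊆ Q)
    (hP : P.Nonempty) (hF : ((graphOf F).induce (Q : Set Pt)).Connected) :
    mstLen P ≤ 2 * weight F := by
  obtain ⟨l, hlQ, hlF⟩ := exists_toFinset_eq_pathLen_le Q F hF
  set l' := l.filter (· ∈ P)
  have hl'P : l'.toFinset = P := by
    ext x
    have hxQ : x ∈ P → x ∈ l := fun hx => List.mem_toFinset.1 (hlQ ▸ hPQ hx)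
    simp only [l', List.mem_toFinset, List.mem_filter, decide_eq_true_eq]
    exact ⟨And.right, fun hx => ⟨hxQ hx, hx⟩⟩
  have hl' : l' ≠ [] := by
    obtain ⟨p, hp⟩ := hP
    exact List.ne_nil_of_mem (List.mem_toFinset.1 (hl'P ▸ hp))
  calc mstLen P = mstLen l'.toFinset := by rw [hl'P]
    _ ≤ pathLen l' := mstLen_toFinset_le_pathLen hl'
    _ ≤ pathLen l := List.filter_sublist.pathLen_le
    _ ≤ 2 * weight F := hlF

lemma mstLen_le_two_mul_smtLen {P : Finset Pt} (hP : P.Nonempty) : mstLen P ≤ 2 * smtLen P := by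
  have : mstLen P / 2 ≤ smtLen P := le_smtLen fun Q hPQ => le_mstLen (hP.mono hPQ) fun T hT => by
    linarith [mstLen_le_two_mul_weight hPQ hP hT.2.2.connected]
  linarith

/-- `edgesIn P E` is the set of purple edges of `E`. -/
def edgesIn (Q : Finset Pt) (F : Finset (Sym2 Pt)) : Finset (Sym2 Pt) :=
  F.filter fun e => ∀ x ∈ e, x ∈ Q

lemma induce_graphOf_edgesIn (Q : Finset Pt) (F : Finset (Sym2 Pt)) :
    (graphOf (edgesIn Q F)).induce (Q : Set Pt) = (graphOf F).induce (Q : Set Pt) := by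
  ext a b
  simp only [induce_graphOf_adj, edgesIn, Finset.mem_filter, Sym2.mem_iff]
  exact ⟨fun h => ⟨h.1, h.2.1⟩, fun h => ⟨h.1, h.2, by rintro x (rfl | rfl) <;> simp⟩⟩

lemma smtLen_le_weight_edgesIn {P Q : Finset Pt} {F : Finset (Sym2 Pt)} (hPQ : P ⊆ Q)
    (hF : ((graphOf F).induce (Q : Set Pt)).Connected) : smtLen P ≤ weight (edgesIn Q F) :=
  (smtLen_le_mstLen hPQ).trans <| mstLen_le_weight <| (induce_graphOf_edgesIn Q F).symm ▸ hF

lemma weight_edgesIn_add_weight_edgesIn_le {R B : Finset Pt} (hRB : Disjoint R B)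
    (P : Finset Pt) (E : Finset (Sym2 Pt)) :
    weight (edgesIn (R ∪ P) E) + weight (edgesIn (B ∪ P) E) ≤
      weight E + weight (edgesIn P E) := by
  have hinter : edgesIn (R ∪ P) E ∩ edgesIn (B ∪ P) E ⊆ edgesIn P E := by
    intro e he
    simp only [edgesIn, Finset.mem_inter, Finset.mem_filter, Finset.mem_union] at he ⊢
    refine ⟨he.1.1, fun x hx => ?_⟩
    rcases he.1.2 x hx, he.2.2 x hx with ⟨hR | hP, hB | hP'⟩
    exacts [absurd hB (Finset.disjoint_left.1 hRB hR), hP', hP, hP]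
  have hunion : edgesIn (R ∪ P) E ∪ edgesIn (B ∪ P) E ⊆ E :=
    Finset.union_subset (Finset.filter_subset _ _) (Finset.filter_subset _ _)
  linarith [weight_union_add_weight_inter (edgesIn (R ∪ P) E) (edgesIn (B ∪ P) E),
    weight_mono hinter, weight_mono hunion]

/-- Each colour class of an RBP graph contains a Steiner tree of `P`, and the two classes
share only the purple edges. -/
lemma IsRBP.two_mul_smtLen_le {R B P : Finset Pt} {E : Finset (Sym2 Pt)} (hRB : Disjoint R B)
    (hE : IsRBP R B P E) : 2 * smtLen P ≤ weight E + weight (edgesIn P E) := by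
  linarith [smtLen_le_weight_edgesIn Finset.subset_union_right hE.2.2.1,
    smtLen_le_weight_edgesIn Finset.subset_union_right hE.2.2.2,
    weight_edgesIn_add_weight_edgesIn_le hRB P E]

lemma connected_induce_sdiff_edgesIn_union {P Q : Finset Pt} {E T : Finset (Sym2 Pt)}
    (hPQ : P ⊆ Q) (hT : ((graphOf T).induce (P : Set Pt)).Connected)
    (hE : ((graphOf E).induce (Q : Set Pt)).Connected) :
    ((graphOf (E \ edgesIn P E ∪ T)).induce (Q : Set Pt)).Connected := by
  refine hE.of_forall_adj_reachable fun a b hab => ?_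
  by_cases hpurple : s((a : Pt), b) ∈ edgesIn P E
  · have hab' : ∀ x ∈ s((a : Pt), b), x ∈ P := (Finset.mem_filter.1 hpurple).2
    have ha : (a : Pt) ∈ (P : Set Pt) := hab' _ (Sym2.mem_mk_left _ _)
    have hb : (b : Pt) ∈ (P : Set Pt) := hab' _ (Sym2.mem_mk_right _ _)
    exact reachable_induce_graphOf_mono Finset.subset_union_right (Finset.coe_subset.2 hPQ)
      (hT.preconnected ⟨a, ha⟩ ⟨b, hb⟩)
  · exact Adj.reachable
      ⟨hab.1, Finset.mem_union_left _ (Finset.mem_sdiff.2 ⟨hab.2, hpurple⟩)⟩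

lemma IsRBP.sdiff_edgesIn_union {R B P : Finset Pt} {E T : Finset (Sym2 Pt)}
    (hE : IsRBP R B P E) (hT : IsSpanningTreeOn P T) :
    IsRBP R B P (E \ edgesIn P E ∪ T) := by
  obtain ⟨hEdiag, hEmem, hER, hEB⟩ := hE
  obtain ⟨hTdiag, hTmem, hTtree⟩ := hT
  refine ⟨fun e he => ?_, fun e he x hx => ?_,
    connected_induce_sdiff_edgesIn_union Finset.subset_union_right hTtree.connected hER,
    connected_induce_sdiff_edgesIn_union Finset.subset_union_right hTtree.connected hEB⟩
  · rcases Finset.mem_union.1 he with he | he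
    exacts [hEdiag e (Finset.mem_sdiff.1 he).1, hTdiag e he]
  · rcases Finset.mem_union.1 he with he | he
    exacts [hEmem e (Finset.mem_sdiff.1 he).1 x hx, Finset.mem_union_right _ (hTmem e he x hx)]

lemma edgesIn_sdiff_edgesIn_union {P : Finset Pt} {E T : Finset (Sym2 Pt)}
    (hT : ∀ e ∈ T, ∀ x ∈ e, x ∈ P) : edgesIn P (E \ edgesIn P E ∪ T) = T := by
  ext e
  simp only [edgesIn, Finset.mem_filter, Finset.mem_union, Finset.mem_sdiff]
  constructor
  · rintro ⟨⟨he, hnot⟩ | he, hP⟩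
    exacts [absurd ⟨he, hP⟩ hnot, he]
  · exact fun he => ⟨Or.inr he, hT e he⟩

lemma weight_sdiff_edgesIn_union_le (P : Finset Pt) (E T : Finset (Sym2 Pt)) :
    weight (E \ edgesIn P E ∪ T) ≤ weight E - weight (edgesIn P E) + weight T := by
  have hsdiff : weight (E \ edgesIn P E) + weight (edgesIn P E) = weight E :=
    Finset.sum_sdiff (Finset.filter_subset _ _)
  linarith [weight_union_le (E \ edgesIn P E) T]

theorem algorithm_A_approximation_general (ρ : ℝ) (hρ1 : 1 ≤ ρ)
    (hρ : ∀ Q : Finset Pt, Q.Nonempty → mstLen Q ≤ ρ * smtLen Q)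
    (R B P : Finset Pt)
    (hRB : Disjoint R B)
    (hPne : P.Nonempty)
    (TP : Finset (Sym2 Pt)) (hTP : IsEMST P TP)
    (E' : Finset (Sym2 Pt))
    (hE'min : ∀ E'' : Finset (Sym2 Pt), IsRBP R B P E'' →
      E''.filter (fun e => ∀ x ∈ e, x ∈ P) = TP → weight E' ≤ weight E'') :
    ∀ E : Finset (Sym2 Pt), IsMinRBP R B P E →
      weight E' ≤ (ρ / 2 + 1) * weight E := by
  intro E hE
  have hE' : weight E' ≤ weight E - weight (edgesIn P E) + mstLen P :=
    (hE'min _ (hE.1.sdiff_edgesIn_union hTP.1) (edgesIn_sdiff_edgesIn_union hTP.1.2.1)).trans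
      (hTP.weight_eq ▸ weight_sdiff_edgesIn_union_le P E TP)
  have hsteiner := hE.1.two_mul_smtLen_le hRB
  -- `ρ` may exceed 2, and then the doubling bound `MST ≤ 2 SMT` is the one to use
  have hmst : mstLen P ≤ min ρ 2 * smtLen P := by
    rw [min_mul_of_nonneg _ _ (smtLen_nonneg P)]
    exact le_min (hρ P hPne) (mstLen_le_two_mul_smtLen hPne)
  have hσ : 1 ≤ min ρ 2 := le_min hρ1 one_le_two
  nlinarith [min_le_left ρ 2, min_le_right ρ 2, weight_nonneg E, weight_nonneg (edgesIn P E),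
    smtLen_nonneg P]

/-- let `ρ ≥ 1` be an upper bound on the Steiner ratio in the plane.
If `G'` is an RBP spanning graph of minimum weight among those whose set of purple
edges is exactly the edge set of a Euclidean MST `T_P` of `P`, then the weight of
`G'` is at most `(ρ/2 + 1)` times the weight of a minimum RBP spanning graph. -/
theorem algorithm_A_approximation (ρ : ℝ) (hρ1 : 1 ≤ ρ)
    (hρ : ∀ Q : Finset Pt, Q.Nonempty → mstLen Q ≤ ρ * smtLen Q)
    (R B P : Finset Pt)
    (hRB : Disjoint R B) (hRP : Disjoint R P) (hBP : Disjoint B P)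
    (hPne : P.Nonempty)
    (TP : Finset (Sym2 Pt)) (hTP : IsEMST P TP)
    (E' : Finset (Sym2 Pt))
    (hE'rbp : IsRBP R B P E')
    (hE'purple : E'.filter (fun e => ∀ x ∈ e, x ∈ P) = TP)
    (hE'min : ∀ E'' : Finset (Sym2 Pt), IsRBP R B P E'' →
      E''.filter (fun e => ∀ x ∈ e, x ∈ P) = TP → weight E' ≤ weight E'') :
    ∀ E : Finset (Sym2 Pt), IsMinRBP R B P E →
      weight E' ≤ (ρ / 2 + 1) * weight E :=
  algorithm_A_approximation_general ρ hρ1 hρ R B P hRB hPne TP hTP E' hE'min
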